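/- Let G1 be a connected δ1-regular graph and G2 be a connected δ2-regular graph on δ1 vertices, and write κ1 = κ(G1) and λi = λ(Gi) for i = 1,2. If G2 is λ'-optimal and either κ1 ≥ λ1−λ2+1 ≥ 2 or κ1 ≥ λ2+1, then G1®G2 is super-λ if and only if λ1 > δ2+1. -/

import Mathlib

open SimpleGraph

section Defs

variable {V : Type*}

/-- The set of edges of `G` with one endpoint in `X` and the other outside `X`. -/
def edgeBoundary (G : SimpleGraph V) (X : Set V) : Set (Sym2 V) :=
  {e | e ∈ G.edgeSet ∧ ∃ u ∈ X, ∃ v ∈ Xᶜ, e = s(u, v)}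

/-- The edge-connectivity `λ(G)`: the minimum number of edges whose removal disconnects `G`. -/
noncomputable def edgeConn (G : SimpleGraph V) : ℕ :=
  sInf {k | ∃ F : Set (Sym2 V), F ⊆ G.edgeSet ∧ F.ncard = k ∧ ¬(G.deleteEdges F).Connected}

/-- `F` is a restricted edge-cut of `G`: removing `F` disconnects `G` and leaves no
isolated vertices. -/
def IsRestrictedEdgeCut (G : SimpleGraph V) (F : Set (Sym2 V)) : Prop :=
  F ⊆ G.edgeSet ∧ ¬(G.deleteEdges F).Connected ∧ ∀ v : V, ∃ w : V, (G.deleteEdges F).Adj v w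

/-- The restricted edge-connectivity `λ'(G)`. -/
noncomputable def restrictedEdgeConn (G : SimpleGraph V) : ℕ :=
  sInf {k | ∃ F : Set (Sym2 V), IsRestrictedEdgeCut G F ∧ F.ncard = k}

/-- The vertex-connectivity `κ(G)`: the minimum size of a set of vertices whose removal
leaves a disconnected graph or a graph with at most one vertex. -/
noncomputable def vertexConn (G : SimpleGraph V) : ℕ :=
  sInf {k | ∃ S : Set V, S.ncard = k ∧
    (¬(G.induce (Sᶜ : Set V)).Connected ∨ (Sᶜ : Set V).ncard ≤ 1)}

/-- The minimum edge-degree `ξ(G) = min {d(u) + d(v) - 2 : uv ∈ E(G)}`. -/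
noncomputable def minEdgeDegree (G : SimpleGraph V) : ℕ :=
  sInf {k | ∃ u v : V, G.Adj u v ∧ (G.neighborSet u).ncard + (G.neighborSet v).ncard - 2 = k}

/-- `G` is `λ'`-optimal if `λ'(G) = ξ(G)`. -/
def LambdaPrimeOptimal (G : SimpleGraph V) : Prop :=
  restrictedEdgeConn G = minEdgeDegree G

/-- The replacement product of `G1` and `G2` with respect to an edge-labelling `ℓ`,
where `ℓ x i` is the other endpoint of the edge of `G1` labelled `i` at the vertex `x`.
Vertices `(x, i)` and `(y, j)` are adjacent iff either `x = y` and `i j ∈ E(G2)`, or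
`x y ∈ E(G1)` and the edge `x y` is labelled `i` at `x` and `j` at `y`. -/
def replacementProduct {V1 V2 : Type*} (G1 : SimpleGraph V1) (G2 : SimpleGraph V2)
    (ℓ : V1 → V2 → V1) : SimpleGraph (V1 × V2) where
  Adj p q := (p.1 = q.1 ∧ G2.Adj p.2 q.2) ∨
    (G1.Adj p.1 q.1 ∧ ℓ p.1 p.2 = q.1 ∧ ℓ q.1 q.2 = p.1)
  symm := by
    constructor
    rintro p q (⟨h1, h2⟩ | ⟨h1, h2, h3⟩)
    · exact Or.inl ⟨h1.symm, h2.symm⟩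
    · exact Or.inr ⟨h1.symm, h3, h2⟩
  loopless := by
    constructor
    rintro p (⟨_, h⟩ | ⟨h, _⟩)
    · exact G2.irrefl h
    · exact G1.irrefl h

/-- `ℓ` is a valid edge-labelling of `G1` for the replacement product:
for each vertex `x`, `ℓ x` is injective and `ℓ x i` is always a neighbour of `x`
(hence `ℓ x` enumerates the neighbours of `x` when `G1` is `|V2|`-regular). -/
def IsRPLabelling {V1 V2 : Type*} (G1 : SimpleGraph V1) (ℓ : V1 → V2 → V1) : Prop :=
  (∀ x, Function.Injective (ℓ x)) ∧ ∀ x i, G1.Adj x (ℓ x i)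

end Defs

/-- A connected graph is super-λ if every minimum edge-cut isolates a vertex;
equivalently, `λ'(G) > λ(G)`. -/
def SuperLambda {V : Type*} (G : SimpleGraph V) : Prop :=
  edgeConn G < restrictedEdgeConn G

/-!
Every vertex of `G1 ® G2` has degree `δ2 + 1`, so `λ(G1 ® G2) ≤ δ2 + 1`, while lifting an edge-cut
of `G1` to the corresponding external edges gives a restricted edge-cut with as many edges; hence
`λ'(G1 ® G2) ≤ λ1`.

Conversely, let `F` be a restricted edge-cut with fewer than `min λ1 (δ2 + 2)` edges. Its external
edges project to fewer than `λ1` edges of `G1`, so if every cloud `{x} × V2` stays connected then so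
does `G1 ® G2 - F`. By `λ'`-optimality a cloud that `F` disconnects loses at least `λ2 ≥ δ2` edges,
so there is only one such cloud `x0` and at most one external edge lies in `F`; the hypotheses on
`κ1` keep `G1 - x0` minus that edge connected, and as `F` isolates no vertex, every vertex of the
bad cloud escapes to a good one. Therefore `λ'(G1 ® G2) ≥ min λ1 (δ2 + 2)` and
`λ(G1 ® G2) ≥ min λ1 (δ2 + 1)`, which gives both directions. For `δ2 = 0` the product has at most
two vertices, so it has no restricted edge-cut and `λ'(G1 ® G2) = sInf ∅ = 0`.
-/

lemma Set.ncard_add_ncard_le_of_disjoint {α : Type*} {A B F : Set α} (hA : A ⊆ F) (hB : B ⊆ F)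
    (hAB : Disjoint A B) (hF : F.Finite) : A.ncard + B.ncard ≤ F.ncard :=
  (Set.ncard_union_eq hAB (hF.subset hA) (hF.subset hB)).symm.trans_le
    (Set.ncard_le_ncard (Set.union_subset hA hB) hF)

namespace SimpleGraph

open Set

variable {V : Type*} (G : SimpleGraph V)

lemma ncard_incidenceSet [Finite V] (v : V) :
    (G.incidenceSet v).ncard = (G.neighborSet v).ncard := by
  classical
  exact Set.ncard_congr' (G.incidenceSetEquivNeighborSet v)

lemma exists_adj_deleteEdges_of_ncard_lt [Finite V] {F : Set (Sym2 V)} {v : V}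
    (h : F.ncard < (G.neighborSet v).ncard) : ∃ w, (G.deleteEdges F).Adj v w := by
  by_contra! hiso
  refine h.not_ge (ncard_le_ncard_of_injOn (fun w => s(v, w)) (fun w hw => ?_) ?_)
  · by_contra hwF
    exact hiso w ((deleteEdges_adj ..).2 ⟨hw, hwF⟩)
  · intro a _ b _ hab
    exact Sym2.congr_right.1 hab

lemma edgeConn_le_ncard {F : Set (Sym2 V)} (hF : F ⊆ G.edgeSet)
    (h : ¬(G.deleteEdges F).Connected) : edgeConn G ≤ F.ncard :=
  Nat.sInf_le ⟨F, hF, rfl, h⟩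

lemma connected_deleteEdges_of_ncard_lt_edgeConn {F : Set (Sym2 V)} (hF : F ⊆ G.edgeSet)
    (h : F.ncard < edgeConn G) : (G.deleteEdges F).Connected := by
  by_contra hdis
  exact h.not_ge (G.edgeConn_le_ncard hF hdis)

lemma not_connected_deleteEdges_incidenceSet [Nontrivial V] (v : V) :
    ¬(G.deleteEdges (G.incidenceSet v)).Connected := by
  intro h
  obtain ⟨u, hu⟩ := exists_ne v
  obtain ⟨p⟩ := h.preconnected v u
  cases p with
  | nil => exact hu rfl
  | cons hadj _ =>
    obtain ⟨hvw, hnot⟩ := (deleteEdges_adj ..).1 hadj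
    exact hnot ((G.mem_incidenceSet ..).2 hvw)

lemma edgeConn_le_ncard_neighborSet [Finite V] [Nontrivial V] (v : V) :
    edgeConn G ≤ (G.neighborSet v).ncard :=
  G.ncard_incidenceSet v ▸
    G.edgeConn_le_ncard (G.incidenceSet_subset v) (G.not_connected_deleteEdges_incidenceSet v)

lemma exists_ncard_eq_edgeConn [Nontrivial V] :
    ∃ F : Set (Sym2 V), F ⊆ G.edgeSet ∧ F.ncard = edgeConn G ∧
      ¬(G.deleteEdges F).Connected := by
  obtain ⟨v⟩ := ‹Nontrivial V›.to_nonempty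
  exact Nat.sInf_mem (s := {k | ∃ F : Set (Sym2 V), F ⊆ G.edgeSet ∧ F.ncard = k ∧
    ¬(G.deleteEdges F).Connected})
    ⟨_, _, G.incidenceSet_subset v, rfl, G.not_connected_deleteEdges_incidenceSet v⟩

lemma restrictedEdgeConn_le_ncard {F : Set (Sym2 V)} (h : IsRestrictedEdgeCut G F) :
    restrictedEdgeConn G ≤ F.ncard :=
  Nat.sInf_le ⟨F, h, rfl⟩

lemma le_restrictedEdgeConn {m : ℕ} {F₀ : Set (Sym2 V)} (hF₀ : IsRestrictedEdgeCut G F₀)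
    (h : ∀ F, IsRestrictedEdgeCut G F → m ≤ F.ncard) : m ≤ restrictedEdgeConn G :=
  le_csInf ⟨_, F₀, hF₀, rfl⟩ fun _ ⟨F, hF, hk⟩ => hk ▸ h F hF

lemma min_le_edgeConn [Finite V] [Nontrivial V] {δ m : ℕ}
    (hr : ∀ v, (G.neighborSet v).ncard = δ) (h : ∀ F, IsRestrictedEdgeCut G F → m ≤ F.ncard) :
    min m δ ≤ edgeConn G := by
  obtain ⟨F, hFE, hF, hdis⟩ := G.exists_ncard_eq_edgeConn
  by_contra! hlt
  have hiso : ∀ v, ∃ w, (G.deleteEdges F).Adj v w :=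
    fun v => G.exists_adj_deleteEdges_of_ncard_lt (by rw [hr]; omega)
  have := h F ⟨hFE, hdis, hiso⟩
  omega

lemma restrictedEdgeConn_eq_zero_of_card_le_two [Fintype V] [Nonempty V] (h : Fintype.card V ≤ 2) :
    restrictedEdgeConn G = 0 := by
  suffices hnone : ∀ F, ¬IsRestrictedEdgeCut G F by
    simp [restrictedEdgeConn, hnone]
  rintro F ⟨-, hdis, hiso⟩
  obtain ⟨p, q, hpq⟩ : ∃ p q, ¬(G.deleteEdges F).Reachable p q := by
    by_contra! h
    exact hdis ⟨h⟩
  obtain ⟨w, hpw⟩ := hiso p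
  refine h.not_gt (Fintype.two_lt_card_iff.2 ⟨p, q, w, ?_, hpw.ne, ?_⟩)
  · rintro rfl
    exact hpq .rfl
  · rintro rfl
    exact hpq hpw.reachable

lemma minEdgeDegree_eq_of_regular {δ : ℕ} (hr : ∀ v, (G.neighborSet v).ncard = δ) {u v : V}
    (huv : G.Adj u v) : minEdgeDegree G = δ + δ - 2 := by
  obtain ⟨a, b, -, hab⟩ := Nat.sInf_mem (s := {k | ∃ u v : V, G.Adj u v ∧
      (G.neighborSet u).ncard + (G.neighborSet v).ncard - 2 = k}) ⟨_, u, v, huv, rfl⟩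
  rw [minEdgeDegree, ← hab, hr, hr]

lemma card_le_succ_of_regular_of_le_one [Fintype V] (hc : G.Connected) {δ : ℕ}
    (hr : ∀ v, (G.neighborSet v).ncard = δ) (hδ : δ ≤ 1) : Fintype.card V ≤ δ + 1 := by
  obtain ⟨v⟩ := hc.nonempty
  have hclosed : ∀ a b, G.Adj a b → a ∈ insert v (G.neighborSet v) →
      b ∈ insert v (G.neighborSet v) := by
    rintro a b hab (rfl | hva)
    · exact Or.inr hab
    · have : (G.neighborSet a).Subsingleton :=
        ncard_le_one_iff_subsingleton.1 ((hr a).trans_le hδ)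
      exact Or.inl (this hab hva.symm)
  have huniv : univ ⊆ insert v (G.neighborSet v) := by
    intro w _
    obtain ⟨p⟩ := hc.preconnected v w
    by_contra hw
    obtain ⟨d, -, hd, hd'⟩ := p.exists_boundary_dart _ (mem_insert v _) hw
    exact hd' (hclosed _ _ d.adj hd)
  calc Fintype.card V = (univ : Set V).ncard := by rw [ncard_univ, Nat.card_eq_fintype_card]
    _ ≤ (insert v (G.neighborSet v)).ncard := ncard_le_ncard huniv
    _ ≤ δ + 1 := (ncard_insert_le _ _).trans (by rw [hr])

lemma connected_induce_compl_of_ncard_lt_vertexConn {S : Set V} (h : S.ncard < vertexConn G) :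
    (G.induce Sᶜ).Connected := by
  by_contra hdis
  exact h.not_ge (Nat.sInf_le ⟨S, rfl, Or.inl hdis⟩)

lemma vertexConn_le_ncard_neighborSet (v : V) : vertexConn G ≤ (G.neighborSet v).ncard := by
  refine Nat.sInf_le ⟨_, rfl, ?_⟩
  rw [or_iff_not_imp_right, not_le]
  intro h hconn
  have hv : v ∈ (G.neighborSet v)ᶜ := G.notMem_neighborSet_self
  obtain ⟨w, hw, hwv⟩ := exists_ne_of_one_lt_ncard h v
  obtain ⟨p⟩ := hconn.preconnected ⟨v, hv⟩ ⟨w, hw⟩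
  obtain ⟨d, -, hd, hd'⟩ := p.exists_boundary_dart {⟨v, hv⟩} rfl (by simpa using hwv)
  have hadj := d.adj
  rw [mem_singleton_iff.1 hd] at hadj
  exact d.snd.2 hadj

lemma connected_induce_compl_singleton_deleteEdges (hκ : 3 ≤ vertexConn G) {e : Sym2 V}
    (he : e ∈ G.edgeSet) (x : V) : ((G.deleteEdges {e}).induce {x}ᶜ).Connected := by
  obtain ⟨u, v, rfl, hux⟩ : ∃ u v, e = s(u, v) ∧ u ≠ x := by
    induction e using Sym2.ind with | _ a b =>
    by_cases hax : a = x
    · exact ⟨b, a, Sym2.eq_swap, fun hbx => G.ne_of_adj he (hax.trans hbx.symm)⟩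
    · exact ⟨a, b, rfl, hax⟩
  -- Every vertex reaches a neighbour `w ∉ {x, v}` of `u`: inside the connected `G - {x, u}`, or
  -- from `u` along the edge `uw ≠ uv`.
  obtain ⟨w, huw, hwx, hwv⟩ : ∃ w, G.Adj u w ∧ w ≠ x ∧ w ≠ v := by
    by_contra! h
    have hsub : G.neighborSet u ⊆ {x, v} := fun w hw => by
      by_cases hwx : w = x
      · exact Or.inl hwx
      · exact Or.inr (h w hw hwx)
    have := (hκ.trans (G.vertexConn_le_ncard_neighborSet u)).trans (ncard_le_ncard hsub)
    have := ncard_insert_le x {v}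
    simp only [ncard_singleton] at this
    omega
  have hconn := G.connected_induce_compl_of_ncard_lt_vertexConn (S := {x, u})
    ((ncard_insert_le _ _).trans_lt (by simp only [ncard_singleton]; omega))
  have hw : w ∈ ({x, u} : Set V)ᶜ := by simp [hwx, huw.ne']
  let φ : G.induce {x, u}ᶜ →g (G.deleteEdges {s(u, v)}).induce {x}ᶜ :=
    { toFun := fun z => ⟨z, fun hz => z.2 (Or.inl hz)⟩
      map_rel' := fun {a b} hab => (deleteEdges_adj ..).2 ⟨hab, fun h => by
        rcases Sym2.eq_iff.1 (mem_singleton_iff.1 h) with ⟨h1, -⟩ | ⟨-, h2⟩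
        · exact a.2 (Or.inr h1)
        · exact b.2 (Or.inr h2)⟩ }
  rw [connected_iff_exists_forall_reachable]
  refine ⟨φ ⟨w, hw⟩, fun z => ?_⟩
  by_cases hzu : (z : V) = u
  · refine Adj.reachable ((deleteEdges_adj ..).2 ⟨hzu ▸ huw.symm, fun h => ?_⟩)
    rcases Sym2.eq_iff.1 (mem_singleton_iff.1 h) with ⟨h1, -⟩ | ⟨h1, -⟩
    · exact huw.ne' h1
    · exact hwv h1
  · have hz : (z : V) ∈ ({x, u} : Set V)ᶜ := by
      rintro (h | h)
      exacts [z.2 h, hzu h]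
    exact (hconn.preconnected ⟨w, hw⟩ ⟨z, hz⟩).map φ

lemma connected_induce_compl_singleton_deleteEdges_of_ncard_le_one [Finite V] {S : Set (Sym2 V)}
    (hS : S ⊆ G.edgeSet) (hS1 : S.ncard ≤ 1) (hκ2 : 2 ≤ vertexConn G)
    (hκ3 : S.Nonempty → 3 ≤ vertexConn G) (x : V) :
    ((G.deleteEdges S).induce {x}ᶜ).Connected := by
  rcases S.eq_empty_or_nonempty with rfl | hne
  · rw [deleteEdges_empty]
    exact G.connected_induce_compl_of_ncard_lt_vertexConn (by rw [ncard_singleton]; omega)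
  · obtain ⟨e, rfl⟩ := ncard_eq_one.1 (le_antisymm hS1 ((ncard_pos (toFinite S)).2 hne))
    exact G.connected_induce_compl_singleton_deleteEdges (hκ3 hne) (hS rfl) x

lemma le_ncard_of_lambdaPrimeOptimal [Finite V] (hc : G.Connected) (hopt : LambdaPrimeOptimal G)
    {δ : ℕ} (hr : ∀ v, (G.neighborSet v).ncard = δ) {C : Set (Sym2 V)} (hC : C ⊆ G.edgeSet)
    (hdis : ¬(G.deleteEdges C).Connected) : δ ≤ C.ncard := by
  by_cases hiso : ∀ u, ∃ w, (G.deleteEdges C).Adj u w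
  · obtain ⟨v⟩ := hc.nonempty
    obtain ⟨w, hvw⟩ := hiso v
    have hξ := G.restrictedEdgeConn_le_ncard ⟨hC, hdis, hiso⟩
    rw [hopt, G.minEdgeDegree_eq_of_regular hr hvw.1] at hξ
    have hC0 : C.Nonempty := nonempty_iff_ne_empty.2 fun h => hdis (by rwa [h, deleteEdges_empty])
    have := (ncard_pos (toFinite C)).2 hC0
    omega
  · push Not at hiso
    obtain ⟨u, hu⟩ := hiso
    by_contra! hlt
    obtain ⟨w, hw⟩ := G.exists_adj_deleteEdges_of_ncard_lt ((hr u).symm ▸ hlt)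
    exact hu w hw

lemma le_edgeConn_of_lambdaPrimeOptimal [Finite V] [Nontrivial V] (hc : G.Connected)
    (hopt : LambdaPrimeOptimal G) {δ : ℕ} (hr : ∀ v, (G.neighborSet v).ncard = δ) :
    δ ≤ edgeConn G := by
  obtain ⟨C, hC, hCard, hdis⟩ := G.exists_ncard_eq_edgeConn
  exact hCard ▸ G.le_ncard_of_lambdaPrimeOptimal hc hopt hr hC hdis

end SimpleGraph

lemma IsRPLabelling.exists_label_eq {V1 V2 : Type*} [Finite V1] [Fintype V2] {G1 : SimpleGraph V1}
    {ℓ : V1 → V2 → V1} {δ1 : ℕ} (hℓ : IsRPLabelling G1 ℓ)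
    (hr1 : ∀ x, (G1.neighborSet x).ncard = δ1) (hd : Fintype.card V2 = δ1) {x y : V1}
    (hxy : G1.Adj x y) : ∃ i, ℓ x i = y := by
  have hrange : Set.range (ℓ x) ⊆ G1.neighborSet x := by
    rintro _ ⟨i, rfl⟩
    exact hℓ.2 x i
  have hy : y ∈ G1.neighborSet x := hxy
  rw [← Set.eq_of_subset_of_ncard_le hrange ?_ (Set.toFinite _)] at hy
  · exact hy
  rw [Set.ncard_range_of_injective (hℓ.1 x), Nat.card_eq_fintype_card, hd, hr1]

namespace ReplacementProduct

open SimpleGraph Set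

variable {V1 V2 : Type*} {G1 : SimpleGraph V1} {G2 : SimpleGraph V2} {ℓ : V1 → V2 → V1}

lemma adj_mk_left {x : V1} {i j : V2} :
    (replacementProduct G1 G2 ℓ).Adj (x, i) (x, j) ↔ G2.Adj i j := by
  simp [replacementProduct]

lemma label_eq_of_adj {p q : V1 × V2} (h : (replacementProduct G1 G2 ℓ).Adj p q)
    (hpq : p.1 ≠ q.1) : ℓ p.1 p.2 = q.1 ∧ ℓ q.1 q.2 = p.1 := by
  rcases h with ⟨h, -⟩ | ⟨-, h⟩
  · exact absurd h hpq
  · exact h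

lemma exists_adj_label (hℓ : IsRPLabelling G1 ℓ) (hsurj : ∀ x y, G1.Adj x y → ∃ i, ℓ x i = y)
    (x : V1) (i : V2) : ∃ j, (replacementProduct G1 G2 ℓ).Adj (x, i) (ℓ x i, j) := by
  obtain ⟨j, hj⟩ := hsurj _ _ (hℓ.2 x i).symm
  exact ⟨j, Or.inr ⟨hℓ.2 x i, rfl, hj⟩⟩

lemma ncard_neighborSet [Finite V1] [Finite V2] {δ2 : ℕ} (hℓ : IsRPLabelling G1 ℓ)
    (hsurj : ∀ x y, G1.Adj x y → ∃ i, ℓ x i = y) (hr2 : ∀ i, (G2.neighborSet i).ncard = δ2)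
    (p : V1 × V2) : ((replacementProduct G1 G2 ℓ).neighborSet p).ncard = δ2 + 1 := by
  obtain ⟨x, i⟩ := p
  obtain ⟨j, hj⟩ := exists_adj_label hℓ hsurj x i
  have hx : ℓ x i ≠ x := (hℓ.2 x i).ne'
  have hN : (replacementProduct G1 G2 ℓ).neighborSet (x, i) =
      insert (ℓ x i, j) (Prod.mk x '' G2.neighborSet i) := by
    ext ⟨y, k⟩
    by_cases hyx : y = x
    · subst hyx
      simp [adj_mk_left, hx.symm]
    · refine ⟨fun h => Or.inl ?_, ?_⟩
      · obtain ⟨hy, hk⟩ := label_eq_of_adj h (Ne.symm hyx)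
        subst hy
        exact Prod.ext rfl (hℓ.1 _ (hk.trans (label_eq_of_adj hj hx.symm).2.symm))
      · rintro (h | ⟨_, -, h⟩)
        · exact h ▸ hj
        · exact absurd (congrArg Prod.fst h).symm hyx
  have hnew : (ℓ x i, j) ∉ Prod.mk x '' G2.neighborSet i := by
    rintro ⟨_, -, h⟩
    exact hx (congrArg Prod.fst h).symm
  rw [hN, ncard_insert_of_notMem hnew,
    ncard_image_of_injective _ (Prod.mk_right_injective x), hr2]

/-- The edges of `F` inside the cloud `{x} × V2`, read as edges of `G2`. -/
def cloudPart (F : Set (Sym2 (V1 × V2))) (x : V1) : Set (Sym2 V2) :=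
  Sym2.map (Prod.mk x) ⁻¹' F

def externalPart (G1 : SimpleGraph V1) (F : Set (Sym2 (V1 × V2))) : Set (Sym2 (V1 × V2)) :=
  {e ∈ F | e.map Prod.fst ∈ G1.edgeSet}

def externalShadow (G1 : SimpleGraph V1) (F : Set (Sym2 (V1 × V2))) : Set (Sym2 V1) :=
  Sym2.map Prod.fst '' externalPart G1 F

lemma externalShadow_subset_edgeSet (F : Set (Sym2 (V1 × V2))) :
    externalShadow G1 F ⊆ G1.edgeSet := by
  rintro _ ⟨e, he, rfl⟩
  exact he.2

lemma ncard_externalShadow_le [Finite V1] [Finite V2] (F : Set (Sym2 (V1 × V2))) :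
    (externalShadow G1 F).ncard ≤ (externalPart G1 F).ncard :=
  ncard_image_le (toFinite _)

lemma cloudPart_subset_edgeSet {F : Set (Sym2 (V1 × V2))}
    (hF : F ⊆ (replacementProduct G1 G2 ℓ).edgeSet) (x : V1) : cloudPart F x ⊆ G2.edgeSet := by
  intro e he
  induction e using Sym2.ind with | _ i j =>
  exact adj_mk_left.1 (hF he)

lemma reachable_of_connected_cloudPart {F : Set (Sym2 (V1 × V2))} {x : V1}
    (hx : (G2.deleteEdges (cloudPart F x)).Connected) (i j : V2) :
    ((replacementProduct G1 G2 ℓ).deleteEdges F).Reachable (x, i) (x, j) :=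
  let φ : G2.deleteEdges (cloudPart F x) →g (replacementProduct G1 G2 ℓ).deleteEdges F :=
    { toFun := Prod.mk x
      map_rel' := fun h => by
        obtain ⟨hG2, hF⟩ := (deleteEdges_adj ..).1 h
        exact (deleteEdges_adj ..).2 ⟨adj_mk_left.2 hG2, hF⟩ }
  (hx.preconnected i j).map φ

lemma exists_adj_deleteEdges_of_adj (hℓ : IsRPLabelling G1 ℓ)
    (hsurj : ∀ x y, G1.Adj x y → ∃ i, ℓ x i = y) {F : Set (Sym2 (V1 × V2))} {x y : V1}
    (h : (G1.deleteEdges (externalShadow G1 F)).Adj x y) :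
    ∃ i j, ((replacementProduct G1 G2 ℓ).deleteEdges F).Adj (x, i) (y, j) := by
  obtain ⟨hxy, hS⟩ := (deleteEdges_adj ..).1 h
  obtain ⟨i, rfl⟩ := hsurj x y hxy
  obtain ⟨j, hij⟩ := exists_adj_label hℓ hsurj x i
  exact ⟨i, j, (deleteEdges_adj ..).2 ⟨hij, fun hF => hS ⟨_, ⟨hF, hxy⟩, rfl⟩⟩⟩

lemma reachable_deleteEdges_of_connected_induce (hℓ : IsRPLabelling G1 ℓ)
    (hsurj : ∀ x y, G1.Adj x y → ∃ i, ℓ x i = y) {F : Set (Sym2 (V1 × V2))} {A : Set V1}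
    (hA : ((G1.deleteEdges (externalShadow G1 F)).induce A).Connected)
    (hclouds : ∀ x ∈ A, (G2.deleteEdges (cloudPart F x)).Connected) {x y : V1} (hx : x ∈ A)
    (hy : y ∈ A) (i j : V2) :
    ((replacementProduct G1 G2 ℓ).deleteEdges F).Reachable (x, i) (y, j) := by
  suffices h : ∀ u v : A, ((G1.deleteEdges (externalShadow G1 F)).induce A).Walk u v →
      ∀ i j, ((replacementProduct G1 G2 ℓ).deleteEdges F).Reachable ((u : V1), i) (v, j) from
    h ⟨x, hx⟩ ⟨y, hy⟩ (hA.preconnected _ _).some i j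
  intro u v p
  induction p with
  | nil => exact reachable_of_connected_cloudPart (hclouds _ (Subtype.prop _))
  | cons hadj _ ih =>
    intro i j
    obtain ⟨a, b, hab⟩ := exists_adj_deleteEdges_of_adj hℓ hsurj hadj
    exact (reachable_of_connected_cloudPart (hclouds _ (Subtype.prop _)) i a).trans
      (hab.reachable.trans (ih b j))

lemma ncard_cloudPart (F : Set (Sym2 (V1 × V2))) (x : V1) :
    (cloudPart F x).ncard = (Sym2.map (Prod.mk x) '' cloudPart F x).ncard :=
  (ncard_image_of_injective _ (Sym2.map.injective (Prod.mk_right_injective x))).symm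

lemma ncard_cloudPart_add_ncard_le [Finite V1] [Finite V2] {F B : Set (Sym2 (V1 × V2))}
    {x : V1} (hB : B ⊆ F) (hxB : ∀ e ∈ B, e.map Prod.fst ≠ s(x, x)) :
    (cloudPart F x).ncard + B.ncard ≤ F.ncard := by
  rw [ncard_cloudPart]
  refine ncard_add_ncard_le_of_disjoint (image_preimage_subset _ _) hB ?_ (toFinite F)
  rw [disjoint_right]
  rintro e he ⟨e', -, rfl⟩
  refine hxB _ he ?_
  induction e' using Sym2.ind with | _ i j => rfl

lemma ncard_cloudPart_add_ncard_cloudPart_le [Finite V1] [Finite V2] (F : Set (Sym2 (V1 × V2)))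
    {x y : V1} (hxy : x ≠ y) : (cloudPart F x).ncard + (cloudPart F y).ncard ≤ F.ncard := by
  rw [ncard_cloudPart F y]
  refine ncard_cloudPart_add_ncard_le (image_preimage_subset _ _) ?_
  rintro _ ⟨e, -, rfl⟩
  induction e using Sym2.ind with | _ i j =>
  simpa using hxy.symm

lemma ncard_cloudPart_add_ncard_externalPart_le [Finite V1] [Finite V2]
    (F : Set (Sym2 (V1 × V2))) (x : V1) :
    (cloudPart F x).ncard + (externalPart G1 F).ncard ≤ F.ncard :=
  ncard_cloudPart_add_ncard_le (sep_subset _ _) fun e he hx => by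
    have : s(x, x) ∈ G1.edgeSet := hx ▸ he.2
    exact G1.irrefl this

lemma exists_reachable_fst_ne [Finite V1] [Finite V2] (hℓ : IsRPLabelling G1 ℓ)
    (hsurj : ∀ x y, G1.Adj x y → ∃ i, ℓ x i = y) {F : Set (Sym2 (V1 × V2))}
    (hext : (externalPart G1 F).ncard ≤ 1)
    (hiso : ∀ p, ∃ q, ((replacementProduct G1 G2 ℓ).deleteEdges F).Adj p q) (x : V1) (i : V2) :
    ∃ q : V1 × V2, q.1 ≠ x ∧ ((replacementProduct G1 G2 ℓ).deleteEdges F).Reachable (x, i) q := by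
  obtain ⟨⟨y, j⟩, hq⟩ := hiso (x, i)
  by_cases hyx : y = x
  swap
  · exact ⟨_, hyx, hq.reachable⟩
  subst hyx
  obtain ⟨k, hk⟩ := exists_adj_label hℓ hsurj y i
  obtain ⟨k', hk'⟩ := exists_adj_label hℓ hsurj y j
  by_cases hi : s((y, i), (ℓ y i, k)) ∈ F
  swap
  · exact ⟨_, (hℓ.2 y i).ne', ((deleteEdges_adj ..).2 ⟨hk, hi⟩).reachable⟩
  by_cases hj : s((y, j), (ℓ y j, k')) ∈ F
  swap
  · exact ⟨_, (hℓ.2 y j).ne', hq.reachable.trans ((deleteEdges_adj ..).2 ⟨hk', hj⟩).reachable⟩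
  -- otherwise `F` contains the two distinct external edges at `(y, i)` and `(y, j)`
  refine absurd hext (not_le.2 ((one_lt_ncard_iff (toFinite _)).2 ⟨_, _, ⟨hi, ?_⟩, ⟨hj, ?_⟩, ?_⟩))
  · simpa using hℓ.2 y i
  · simpa using hℓ.2 y j
  · rw [Ne, Sym2.eq_iff]
    rintro (⟨h, -⟩ | ⟨h, -⟩)
    · exact hq.ne h
    · exact (hℓ.2 y j).ne (congrArg Prod.fst h)

lemma connected_deleteEdges_of_forall_ne_connected_cloudPart [Finite V1] [Finite V2]
    [Nonempty V2] (hℓ : IsRPLabelling G1 ℓ) (hsurj : ∀ x y, G1.Adj x y → ∃ i, ℓ x i = y)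
    {F : Set (Sym2 (V1 × V2))} {x0 : V1}
    (hA : ((G1.deleteEdges (externalShadow G1 F)).induce {x0}ᶜ).Connected)
    (hclouds : ∀ x ≠ x0, (G2.deleteEdges (cloudPart F x)).Connected)
    (hext : (externalPart G1 F).ncard ≤ 1)
    (hiso : ∀ p, ∃ q, ((replacementProduct G1 G2 ℓ).deleteEdges F).Adj p q) :
    ((replacementProduct G1 G2 ℓ).deleteEdges F).Connected := by
  have hout : ∀ p : V1 × V2, ∃ q : V1 × V2, q.1 ≠ x0 ∧
      ((replacementProduct G1 G2 ℓ).deleteEdges F).Reachable p q := by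
    rintro ⟨x, i⟩
    by_cases hx : x = x0
    · exact hx ▸ exists_reachable_fst_ne hℓ hsurj hext hiso x i
    · exact ⟨(x, i), hx, .rfl⟩
  have : Nonempty V1 := ⟨hA.nonempty.some⟩
  refine ⟨fun p q => ?_⟩
  obtain ⟨p', hp', hpp'⟩ := hout p
  obtain ⟨q', hq', hqq'⟩ := hout q
  exact hpp'.trans
    ((reachable_deleteEdges_of_connected_induce hℓ hsurj hA hclouds hp' hq' _ _).trans hqq'.symm)

variable (G1 G2 ℓ) in
def liftEdges (F1 : Set (Sym2 V1)) : Set (Sym2 (V1 × V2)) :=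
  {e ∈ (replacementProduct G1 G2 ℓ).edgeSet | e.map Prod.fst ∈ F1}

lemma reachable_deleteEdges_of_reachable_deleteEdges_liftEdges {F1 : Set (Sym2 V1)}
    {p q : V1 × V2}
    (h : ((replacementProduct G1 G2 ℓ).deleteEdges (liftEdges G1 G2 ℓ F1)).Reachable p q) :
    (G1.deleteEdges F1).Reachable p.1 q.1 := by
  obtain ⟨w⟩ := h
  induction w with
  | nil => rfl
  | cons hadj _ ih =>
    obtain ⟨hR, hF⟩ := (deleteEdges_adj ..).1 hadj
    refine Reachable.trans ?_ ih
    rcases id hR with ⟨h, -⟩ | ⟨hG1, -⟩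
    · rw [h]
    · exact ((deleteEdges_adj ..).2 ⟨hG1, fun h => hF ⟨hR, h⟩⟩).reachable

lemma eq_of_adj_of_adj (hℓ : IsRPLabelling G1 ℓ) {p q p' q' : V1 × V2}
    (h : (replacementProduct G1 G2 ℓ).Adj p q) (h' : (replacementProduct G1 G2 ℓ).Adj p' q')
    (hpq : p.1 ≠ q.1) (hp : p.1 = p'.1) (hq : q.1 = q'.1) : p = p' := by
  have hl := (label_eq_of_adj h hpq).1
  have hl' := (label_eq_of_adj h' (hp ▸ hq ▸ hpq)).1
  rw [← hp, ← hq] at hl'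
  exact Prod.ext hp (hℓ.1 _ (hl.trans hl'.symm))

lemma ncard_liftEdges_le [Finite V1] [Finite V2] (hℓ : IsRPLabelling G1 ℓ) {F1 : Set (Sym2 V1)}
    (hF1 : F1 ⊆ G1.edgeSet) : (liftEdges G1 G2 ℓ F1).ncard ≤ F1.ncard := by
  refine ncard_le_ncard_of_injOn (Sym2.map Prod.fst) (fun e he => he.2) ?_ (toFinite _)
  intro e he e' he' h
  induction e using Sym2.ind with | _ p q =>
  induction e' using Sym2.ind with | _ p' q' =>
  have hR : (replacementProduct G1 G2 ℓ).Adj p q := he.1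
  have hR' : (replacementProduct G1 G2 ℓ).Adj p' q' := he'.1
  have hpq : p.1 ≠ q.1 := G1.ne_of_adj (hF1 he.2)
  rw [Sym2.map_mk, Sym2.map_mk, Sym2.eq_iff] at h
  rcases h with ⟨hp, hq⟩ | ⟨hp, hq⟩
  · rw [eq_of_adj_of_adj hℓ hR hR' hpq hp hq, eq_of_adj_of_adj hℓ hR.symm hR'.symm hpq.symm hq hp]
  · rw [eq_of_adj_of_adj hℓ hR hR'.symm hpq hp hq, eq_of_adj_of_adj hℓ hR.symm hR' hpq.symm hq hp,
      Sym2.eq_swap]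

lemma isRestrictedEdgeCut_liftEdges [Nonempty V2] (hG2 : ∀ i, ∃ j, G2.Adj i j)
    {F1 : Set (Sym2 V1)} (hF1 : F1 ⊆ G1.edgeSet) (hdis : ¬(G1.deleteEdges F1).Connected) :
    IsRestrictedEdgeCut (replacementProduct G1 G2 ℓ) (liftEdges G1 G2 ℓ F1) := by
  refine ⟨fun e he => he.1, fun hconn => hdis ?_, fun ⟨x, i⟩ => ?_⟩
  · obtain ⟨i⟩ := ‹Nonempty V2›
    have : Nonempty V1 := ⟨hconn.nonempty.some.1⟩
    exact ⟨fun x y => reachable_deleteEdges_of_reachable_deleteEdges_liftEdges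
      (hconn.preconnected (x, i) (y, i))⟩
  · obtain ⟨j, hj⟩ := hG2 i
    refine ⟨(x, j), (deleteEdges_adj ..).2 ⟨adj_mk_left.2 hj, fun h => ?_⟩⟩
    have : s(x, x) ∈ G1.edgeSet := hF1 h.2
    exact G1.irrefl this

lemma restrictedEdgeConn_le_edgeConn [Finite V1] [Finite V2] [Nontrivial V1] [Nonempty V2]
    (hℓ : IsRPLabelling G1 ℓ) (hG2 : ∀ i, ∃ j, G2.Adj i j) :
    restrictedEdgeConn (replacementProduct G1 G2 ℓ) ≤ edgeConn G1 := by
  obtain ⟨F1, hF1E, hF1, hdis⟩ := G1.exists_ncard_eq_edgeConn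
  exact (restrictedEdgeConn_le_ncard _ (isRestrictedEdgeCut_liftEdges hG2 hF1E hdis)).trans
    (hF1 ▸ ncard_liftEdges_le hℓ hF1E)

section

variable [Fintype V1] [Fintype V2] {δ1 δ2 : ℕ}

lemma connected_deleteEdges_of_not_connected_cloudPart (hℓ : IsRPLabelling G1 ℓ)
    (hc2 : G2.Connected) (hr1 : ∀ x, (G1.neighborSet x).ncard = δ1)
    (hr2 : ∀ i, (G2.neighborSet i).ncard = δ2) (hd : Fintype.card V2 = δ1)
    (hopt : LambdaPrimeOptimal G2)
    (hκ : (edgeConn G1 + 1 ≤ vertexConn G1 + edgeConn G2 ∧ edgeConn G2 + 1 ≤ edgeConn G1) ∨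
      edgeConn G2 + 1 ≤ vertexConn G1)
    (hδ2 : 1 ≤ δ2) {F : Set (Sym2 (V1 × V2))} (hF : F ⊆ (replacementProduct G1 G2 ℓ).edgeSet)
    (hF1 : F.ncard < edgeConn G1) (hF2 : F.ncard ≤ δ2 + 1)
    (hiso : ∀ p, ∃ q, ((replacementProduct G1 G2 ℓ).deleteEdges F).Adj p q) {x0 : V1}
    (hx0 : ¬(G2.deleteEdges (cloudPart F x0)).Connected) :
    ((replacementProduct G1 G2 ℓ).deleteEdges F).Connected := by
  have hsurj : ∀ x y, G1.Adj x y → ∃ i, ℓ x i = y := fun _ _ => hℓ.exists_label_eq hr1 hd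
  obtain ⟨i0⟩ := hc2.nonempty
  obtain ⟨j0, hj0⟩ := nonempty_of_ncard_ne_zero (s := G2.neighborSet i0) (by rw [hr2]; omega)
  have : Nontrivial V2 := nontrivial_of_ne _ _ (G2.ne_of_adj hj0)
  have : Nontrivial V1 := nontrivial_of_ne _ _ (hℓ.2 x0 i0).ne'
  have hcost : ∀ x, ¬(G2.deleteEdges (cloudPart F x)).Connected →
      edgeConn G2 ≤ (cloudPart F x).ncard :=
    fun x hx => G2.edgeConn_le_ncard (cloudPart_subset_edgeSet hF x) hx
  have hmax2 : δ2 ≤ edgeConn G2 := G2.le_edgeConn_of_lambdaPrimeOptimal hc2 hopt hr2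
  -- a 1-regular connected `G2` is `K₂`, so then `λ1 ≤ δ1 = 2`
  have hsmall : 1 < δ2 ∨ edgeConn G1 ≤ δ2 + 1 := by
    refine (lt_or_ge 1 δ2).imp_right fun h => ?_
    calc edgeConn G1 ≤ δ1 := hr1 x0 ▸ G1.edgeConn_le_ncard_neighborSet x0
      _ = Fintype.card V2 := hd.symm
      _ ≤ δ2 + 1 := G2.card_le_succ_of_regular_of_le_one hc2 hr2 h
  have hb := hcost x0 hx0
  have hbt := ncard_cloudPart_add_ncard_externalPart_le (G1 := G1) F x0
  have hext : (externalPart G1 F).ncard ≤ 1 := by omega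
  have hclouds : ∀ x ≠ x0, (G2.deleteEdges (cloudPart F x)).Connected := by
    intro x hx
    by_contra hbad
    have := hcost x hbad
    have := ncard_cloudPart_add_ncard_cloudPart_le F hx
    omega
  have hA : ((G1.deleteEdges (externalShadow G1 F)).induce {x0}ᶜ).Connected := by
    refine G1.connected_induce_compl_singleton_deleteEdges_of_ncard_le_one
      (externalShadow_subset_edgeSet F) ((ncard_externalShadow_le F).trans hext)
      (by omega) (fun hS => ?_) x0
    -- an external edge in `F` leaves the bad cloud at most `λ1 - 2` edges, so `λ2 + 2 ≤ λ1`
    have := (ncard_pos (toFinite _)).2 hS.of_image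
    omega
  exact connected_deleteEdges_of_forall_ne_connected_cloudPart hℓ hsurj hA hclouds hext hiso

theorem min_edgeConn_le_ncard_of_isRestrictedEdgeCut (hℓ : IsRPLabelling G1 ℓ)
    (hc2 : G2.Connected) (hr1 : ∀ x, (G1.neighborSet x).ncard = δ1)
    (hr2 : ∀ i, (G2.neighborSet i).ncard = δ2) (hd : Fintype.card V2 = δ1)
    (hopt : LambdaPrimeOptimal G2)
    (hκ : (edgeConn G1 + 1 ≤ vertexConn G1 + edgeConn G2 ∧ edgeConn G2 + 1 ≤ edgeConn G1) ∨
      edgeConn G2 + 1 ≤ vertexConn G1)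
    (hδ2 : 1 ≤ δ2) {F : Set (Sym2 (V1 × V2))}
    (hF : IsRestrictedEdgeCut (replacementProduct G1 G2 ℓ) F) :
    min (edgeConn G1) (δ2 + 2) ≤ F.ncard := by
  obtain ⟨hFE, hdis, hiso⟩ := hF
  by_contra! hF
  rw [lt_min_iff] at hF
  by_cases hbad : ∃ x0, ¬(G2.deleteEdges (cloudPart F x0)).Connected
  · obtain ⟨x0, hx0⟩ := hbad
    exact hdis (connected_deleteEdges_of_not_connected_cloudPart hℓ hc2 hr1 hr2 hd hopt hκ hδ2 hFE
      hF.1 (by omega) hiso hx0)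
  push Not at hbad
  have hS : (G1.deleteEdges (externalShadow G1 F)).Connected :=
    G1.connected_deleteEdges_of_ncard_lt_edgeConn (externalShadow_subset_edgeSet F)
      ((ncard_externalShadow_le F).trans_lt ((ncard_le_ncard (sep_subset _ _)).trans_lt hF.1))
  have : Nonempty (V1 × V2) := ⟨hS.nonempty.some, hc2.nonempty.some⟩
  exact hdis ⟨fun p q => reachable_deleteEdges_of_connected_induce hℓ
    (fun _ _ => hℓ.exists_label_eq hr1 hd) ((induceUnivIso _).connected_iff.2 hS)
    (fun x _ => hbad x) (mem_univ p.1) (mem_univ q.1) p.2 q.2⟩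

end

end ReplacementProduct

open ReplacementProduct in
/-- Theorem 4.6 (b). Let `G1` be a connected `δ1`-regular graph and `G2`
a connected `δ2`-regular graph on `δ1` vertices. If `G2` is `λ'`-optimal and either
`κ1 ≥ λ1 - λ2 + 1 ≥ 2` or `κ1 ≥ λ2 + 1`, then `G1 ® G2` is super-λ iff
`λ1 > δ2 + 1`. -/
theorem replacementProduct_superLambda_iff
    {V1 V2 : Type*} [Fintype V1] [Fintype V2] {δ1 δ2 : ℕ}
    (G1 : SimpleGraph V1) (G2 : SimpleGraph V2) (ℓ : V1 → V2 → V1)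
    (hℓ : IsRPLabelling G1 ℓ)
    (hc1 : G1.Connected) (hc2 : G2.Connected)
    (hr1 : ∀ x : V1, (G1.neighborSet x).ncard = δ1)
    (hr2 : ∀ i : V2, (G2.neighborSet i).ncard = δ2)
    (hd : Fintype.card V2 = δ1)
    (hopt : LambdaPrimeOptimal G2)
    (hκ : (edgeConn G1 + 1 ≤ vertexConn G1 + edgeConn G2 ∧
        edgeConn G2 + 1 ≤ edgeConn G1) ∨
      edgeConn G2 + 1 ≤ vertexConn G1) :
    SuperLambda (replacementProduct G1 G2 ℓ) ↔ δ2 + 1 < edgeConn G1 := by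
  obtain ⟨x0⟩ := hc1.nonempty
  have : Nonempty V2 := hc2.nonempty
  obtain ⟨i0⟩ := hc2.nonempty
  have : Nontrivial V1 := nontrivial_of_ne _ _ (hℓ.2 x0 i0).ne'
  have hE1 : edgeConn G1 ≤ Fintype.card V2 := hd ▸ hr1 x0 ▸ G1.edgeConn_le_ncard_neighborSet x0
  have hdegR := ncard_neighborSet (G2 := G2) hℓ (fun _ _ => hℓ.exists_label_eq hr1 hd) hr2
  have hER : edgeConn (replacementProduct G1 G2 ℓ) ≤ δ2 + 1 :=
    hdegR (x0, i0) ▸ edgeConn_le_ncard_neighborSet _ _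
  unfold SuperLambda
  rcases Nat.eq_zero_or_pos δ2 with rfl | hδ2
  · have hV2 := G2.card_le_succ_of_regular_of_le_one hc2 hr2 zero_le_one
    have hV1 := G1.card_le_succ_of_regular_of_le_one hc1 hr1 (by omega)
    rw [restrictedEdgeConn_eq_zero_of_card_le_two _ (by rw [Fintype.card_prod]; nlinarith)]
    omega
  have hG2 : ∀ i, ∃ j, G2.Adj i j := fun i =>
    Set.nonempty_of_ncard_ne_zero (s := G2.neighborSet i) (by rw [hr2]; omega)
  have hkey := fun F (hF : IsRestrictedEdgeCut _ F) =>
    min_edgeConn_le_ncard_of_isRestrictedEdgeCut hℓ hc2 hr1 hr2 hd hopt hκ hδ2 hF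
  have hE := (replacementProduct G1 G2 ℓ).min_le_edgeConn hdegR hkey
  have hR := (replacementProduct G1 G2 ℓ).le_restrictedEdgeConn (isRestrictedEdgeCut_liftEdges hG2
    (G1.incidenceSet_subset x0) (G1.not_connected_deleteEdges_incidenceSet x0)) hkey
  have hR' := restrictedEdgeConn_le_edgeConn hℓ hG2
  omega
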